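/- arXiv:1412.0926 — 2 statements merged into one kernel-verified Lean document; each statement's English description precedes it below -/
import Mathlib

section
/- Let k be a field of characteristic zero and let H be a k-linear subspace of k⟦t⟧ of dimension r+1. Let s_0 < s_1 < ⋯ < s_r be the elements of the set { ord(f) : f ∈ H, f ≠ 0 } (which has exactly r+1 elements). Then for every basis f_0, …, f_r of H, the Wronskian Wr(f_0,…,f_r) is nonzero of order s_0 + s_1 + ⋯ + s_r − r(r+1)/2; in particular this order is independent of the choice of basis. -/
/-- The Wronskian of the power series `f_0, …, f_r`: the determinant of the
`(r+1) × (r+1)` matrix whose `(i,j)` entry is the `j`-th formal derivative of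
`f_i`. -/
noncomputable def psWronskian {k : Type*} [CommRing k] (r : ℕ)
    (f : Fin (r + 1) → PowerSeries k) : PowerSeries k :=
  (Matrix.of fun i j : Fin (r + 1) =>
    (PowerSeries.derivativeFun)^[(j : ℕ)] (f i)).det

/-!
Choose `gᵢ ∈ H` with `ord gᵢ = sᵢ`. They form a second basis of `H`, so `Wr(g) = det B · Wr(f)`
for the invertible change-of-basis matrix `B`, and it suffices to compute the order of `Wr(g)`.
In the Leibniz expansion of `Wr(g)`, the term of `σ` is `∏ Dⁱ g_{σ i}`, divisible by
`X ^ ∑ (s_{σ i} - i)`. This exponent is at least `N = ∑ (sᵢ - i)`, with equality exactly when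
`i ≤ s_{σ i}` for all `i`. So `Wr(g)` vanishes below degree `N`, and its coefficient of `X ^ N`
is `∏ lc(gᵢ)` times `det (sᵢ (sᵢ - 1) ⋯ (sᵢ - j + 1))ᵢⱼ`, which equals the Vandermonde
determinant of the distinct `sᵢ` and so is nonzero in characteristic zero.
-/

open PowerSeries Finset Matrix

namespace Fin

theorem val_le_of_strictMono {n : ℕ} {s : Fin n → ℕ} (hs : StrictMono s) (i : Fin n) :
    (i : ℕ) ≤ s i := by
  obtain ⟨i, hi⟩ := i
  induction i with
  | zero => exact Nat.zero_le _
  | succ i ih =>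
    have hstep := hs (show (⟨i, by omega⟩ : Fin n) < ⟨i + 1, hi⟩ from Nat.lt_succ_self i)
    have hi' : i ≤ s ⟨i, by omega⟩ := ih (by omega)
    show i + 1 ≤ _
    omega

theorem sum_tsub_val_add_triangle {r : ℕ} {s : Fin (r + 1) → ℕ}
    (hle : ∀ i : Fin (r + 1), (i : ℕ) ≤ s i) :
    ∑ i : Fin (r + 1), (s i - i) + r * (r + 1) / 2 = ∑ i, s i := by
  have hgauss : ∑ i : Fin (r + 1), (i : ℕ) = r * (r + 1) / 2 := by
    rw [Fin.sum_univ_eq_sum_range (fun i => i), sum_range_id, Nat.add_sub_cancel, mul_comm]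
  rw [← hgauss, ← sum_add_distrib]
  exact sum_congr rfl fun i _ => Nat.sub_add_cancel (hle i)

end Fin

namespace PowerSeries

section Products

variable {R ι : Type*} [CommSemiring R] [Fintype ι] {h : ι → R⟦X⟧} {a : ι → ℕ}

theorem coeff_prod_of_lt_sum (ha : ∀ i, X ^ a i ∣ h i) {n : ℕ} (hn : n < ∑ i, a i) :
    coeff n (∏ i, h i) = 0 := by
  have hdvd : X ^ (∑ i, a i) ∣ ∏ i, h i := by
    rw [← prod_pow_eq_pow_sum]
    exact prod_dvd_prod_of_dvd _ _ fun i _ => ha i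
  exact X_pow_dvd_iff.1 hdvd n hn

theorem coeff_sum_prod (ha : ∀ i, X ^ a i ∣ h i) :
    coeff (∑ i, a i) (∏ i, h i) = ∏ i, coeff (a i) (h i) := by
  choose q hq using ha
  have hcoeff : ∀ (n : ℕ) (p : R⟦X⟧), coeff n (X ^ n * p) = constantCoeff p := fun n p => by
    simpa using coeff_X_pow_mul p n 0
  simp only [hq, prod_mul_distrib, prod_pow_eq_pow_sum, hcoeff, map_prod]

end Products

theorem X_pow_sub_dvd_iterate_derivative {R : Type*} [CommSemiring R] {f : R⟦X⟧} {n : ℕ}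
    (hf : X ^ n ∣ f) (m : ℕ) : X ^ (n - m) ∣ (d⁄dX R)^[m] f := by
  refine X_pow_dvd_iff.2 fun j hj => ?_
  rw [coeff_iterate_derivative, X_pow_dvd_iff.1 hf (j + m) (by omega), mul_zero]

theorem iterate_derivative_sum_smul {R ι : Type*} [CommSemiring R] [Fintype ι] (m : ℕ)
    (c : ι → R) (f : ι → R⟦X⟧) :
    (d⁄dX R)^[m] (∑ i, c i • f i) = ∑ i, c i • (d⁄dX R)^[m] (f i) := by
  rw [← Derivation.coeFn_coe, ← Module.End.coe_pow, map_sum]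
  simp only [map_smul]

end PowerSeries

section Wronskian

variable {k : Type*} [CommRing k] {r : ℕ}

theorem psWronskian_eq_det (f : Fin (r + 1) → k⟦X⟧) :
    psWronskian r f = (of fun i j : Fin (r + 1) => (d⁄dX k)^[j] (f i)).det :=
  rfl

theorem psWronskian_linearCombination (B : Matrix (Fin (r + 1)) (Fin (r + 1)) k)
    (f : Fin (r + 1) → k⟦X⟧) :
    psWronskian r (fun j => ∑ i, B j i • f i) = C B.det * psWronskian r f := by
  have hmat : (of fun j m : Fin (r + 1) => (d⁄dX k)^[m] (∑ i, B j i • f i))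
      = B.map C * of fun i m : Fin (r + 1) => (d⁄dX k)^[m] (f i) := by
    refine Matrix.ext fun j m => ?_
    rw [of_apply, iterate_derivative_sum_smul, mul_apply]
    simp only [of_apply, map_apply, smul_eq_C_mul]
  rw [psWronskian_eq_det, hmat, det_mul, ← RingHom.mapMatrix_apply, ← RingHom.map_det,
    psWronskian_eq_det]

theorem det_descFactorial_ne_zero [IsDomain k] [CharZero k] {n : ℕ} {s : Fin n → ℕ}
    (hs : Function.Injective s) :
    (of fun i j : Fin n => ((s i).descFactorial j : k)).det ≠ 0 := by
  have hvdm := det_eval_matrixOfPolynomials_eq_det_vandermonde (fun i => (s i : k))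
    (fun j => descPochhammer k j) (fun j => descPochhammer_natDegree _ _)
    (fun j => monic_descPochhammer _ _)
  simp only [descPochhammer_eval_eq_descFactorial] at hvdm
  rw [← hvdm, det_vandermonde_ne_zero_iff]
  exact Nat.cast_injective.comp hs

variable {s : Fin (r + 1) → ℕ} {g : Fin (r + 1) → k⟦X⟧}

theorem coeff_prod_iterate_derivative_perm (hle : ∀ i : Fin (r + 1), (i : ℕ) ≤ s i)
    (hg : ∀ i, X ^ s i ∣ g i) (σ : Equiv.Perm (Fin (r + 1))) :
    (∀ n < ∑ i : Fin (r + 1), (s i - i),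
        coeff n (∏ i : Fin (r + 1), (d⁄dX k)^[i] (g (σ i))) = 0) ∧
      coeff (∑ i : Fin (r + 1), (s i - i)) (∏ i : Fin (r + 1), (d⁄dX k)^[i] (g (σ i)))
        = ∏ i, ((s (σ i)).descFactorial i : k) * coeff (s (σ i)) (g (σ i)) := by
  have hdvd : ∀ i : Fin (r + 1), X ^ (s (σ i) - i) ∣ (d⁄dX k)^[i] (g (σ i)) :=
    fun i => X_pow_sub_dvd_iterate_derivative (hg (σ i)) i
  have hsum : ∑ i, s (σ i) = ∑ i, s i := Equiv.sum_comp σ s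
  have hsplit : ∑ i : Fin (r + 1), (s i - i) + ∑ i : Fin (r + 1), (i : ℕ) = ∑ i, s i := by
    rw [← sum_add_distrib]
    exact sum_congr rfl fun i _ => Nat.sub_add_cancel (hle i)
  by_cases hσ : ∀ i : Fin (r + 1), (i : ℕ) ≤ s (σ i)
  · have hexp : ∑ i : Fin (r + 1), (s (σ i) - i) = ∑ i : Fin (r + 1), (s i - i) := by
      have hsplitσ : ∑ i : Fin (r + 1), (s (σ i) - i) + ∑ i : Fin (r + 1), (i : ℕ)
          = ∑ i, s (σ i) := by
        rw [← sum_add_distrib]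
        exact sum_congr rfl fun i _ => Nat.sub_add_cancel (hσ i)
      omega
    rw [← hexp]
    refine ⟨fun n hn => coeff_prod_of_lt_sum hdvd hn, ?_⟩
    rw [coeff_sum_prod hdvd]
    refine prod_congr rfl fun i _ => ?_
    rw [coeff_iterate_derivative, ← Nat.add_descFactorial_eq_ascFactorial,
      Nat.sub_add_cancel (hσ i)]
  · push Not at hσ
    obtain ⟨i₀, hi₀⟩ := hσ
    have hexp : ∑ i : Fin (r + 1), (s i - i) < ∑ i : Fin (r + 1), (s (σ i) - i) := by
      have hlt : ∑ i, s (σ i) < ∑ i : Fin (r + 1), ((s (σ i) - i) + i) :=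
        sum_lt_sum (fun i _ => le_tsub_add) ⟨i₀, mem_univ _, by omega⟩
      rw [sum_add_distrib] at hlt
      omega
    refine ⟨fun n hn => coeff_prod_of_lt_sum hdvd (hn.trans hexp), ?_⟩
    rw [coeff_prod_of_lt_sum hdvd hexp, eq_comm]
    exact prod_eq_zero (mem_univ i₀) (by simp [Nat.descFactorial_eq_zero_iff_lt.2 hi₀])

theorem order_psWronskian_of_strictMono [IsDomain k] [CharZero k] (hs : StrictMono s)
    (hg : ∀ i, (g i).order = s i) :
    (psWronskian r g).order = ((∑ i : Fin (r + 1), (s i - i) : ℕ) : ℕ∞) := by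
  have hdvd : ∀ i, X ^ s i ∣ g i := fun i =>
    X_pow_dvd_iff.2 fun m hm => coeff_of_lt_order m (by rw [hg]; exact_mod_cast hm)
  have hterm := coeff_prod_iterate_derivative_perm (Fin.val_le_of_strictMono hs) hdvd
  have hcoeff : ∀ n, coeff n (psWronskian r g)
      = ∑ σ : Equiv.Perm (Fin (r + 1)), Equiv.Perm.sign σ •
          coeff n (∏ i : Fin (r + 1), (d⁄dX k)^[i] (g (σ i))) := fun n => by
    simp only [psWronskian_eq_det, det_apply, map_sum, Units.smul_def, map_zsmul, of_apply]
  refine order_eq_nat.2 ⟨?_, fun n hn => ?_⟩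
  · have hlead : coeff (∑ i : Fin (r + 1), (s i - i)) (psWronskian r g)
        = (∏ i, coeff (s i) (g i)) *
            (of fun i j : Fin (r + 1) => ((s i).descFactorial j : k)).det := by
      rw [← det_mul_column]
      simp only [hcoeff, (hterm _).2, det_apply, of_apply, mul_comm]
    rw [hlead]
    exact mul_ne_zero (prod_ne_zero_iff.2 fun i _ => (order_eq_nat.1 (hg i)).1)
      (det_descFactorial_ne_zero hs.injective)
  · simp only [hcoeff, (hterm _).1 n hn, smul_zero, sum_const_zero]

end Wronskian

/-- Let `k` have characteristic zero and let `H ⊆ k⟦t⟧` be a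
`k`-subspace of dimension `r + 1`, whose set of orders of nonzero elements is
enumerated as `s_0 < s_1 < ⋯ < s_r`. Then for every basis `f_0, …, f_r` of `H`
(equivalently, any `r+1` linearly independent elements of `H`), the Wronskian
is nonzero of order `s_0 + ⋯ + s_r - r(r+1)/2` (stated additively); in
particular this order does not depend on the choice of basis. -/
theorem statement_10 {k : Type*} [Field k] [CharZero k] (r : ℕ)
    (H : Submodule k (PowerSeries k)) [FiniteDimensional k H]
    (hdim : Module.finrank k H = r + 1)
    (s : Fin (r + 1) → ℕ) (hs : StrictMono s)
    (hrange : {n : ℕ | ∃ f ∈ H, f ≠ 0 ∧ PowerSeries.order f = (n : ℕ∞)}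
        = Set.range s)
    (f : Fin (r + 1) → PowerSeries k) (hfH : ∀ i, f i ∈ H)
    (hli : LinearIndependent k f) :
    psWronskian r f ≠ 0 ∧
      (psWronskian r f).order + ((r * (r + 1) / 2 : ℕ) : ℕ∞)
        = ((∑ i, s i : ℕ) : ℕ∞) := by
  have hspan : Submodule.span k (Set.range f) = H :=
    Submodule.eq_of_le_of_finrank_eq (Submodule.span_le.2 (Set.range_subset_iff.2 hfH))
      (by rw [finrank_span_eq_card hli, hdim, Fintype.card_fin])
  have hex : ∀ i, ∃ g ∈ H, g ≠ 0 ∧ g.order = s i := fun i =>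
    hrange.symm.subset (Set.mem_range_self i)
  choose g hgH _ hgord using hex
  choose B hB using fun j => (Submodule.mem_span_range_iff_exists_fun k).1 (hspan ▸ hgH j)
  have hWg : psWronskian r g = C (of B).det * psWronskian r f := by
    rw [← psWronskian_linearCombination]
    simp only [of_apply, hB]
  have hWg_order := order_psWronskian_of_strictMono hs hgord
  have hWg0 : psWronskian r g ≠ 0 := by
    simp [← order_eq_top, hWg_order]
  have hdet : (of B).det ≠ 0 := fun h => hWg0 (by rw [hWg, h, map_zero, zero_mul])
  refine ⟨fun h => hWg0 (by rw [hWg, h, mul_zero]), ?_⟩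
  rw [hWg, order_mul, order_zero_of_unit ((isUnit_iff_ne_zero.2 hdet).map C), zero_add]
    at hWg_order
  rw [hWg_order, ← Nat.cast_add, Fin.sum_tsub_val_add_triangle (Fin.val_le_of_strictMono hs)]
end

section
/- Let d ≥ 1 and g be integers, and let S be an additive subsemigroup of ℕ × ℤ such that: (i) the subgroup of ℤ × ℤ generated by S is all of ℤ × ℤ; (ii) there is a constant C with |s| ≤ Cn for every (n,s) ∈ S with n ≥ 1; (iii) there is n₀ ≥ 1 such that for every n ≥ n₀ the slice S_n := { s ∈ ℤ : (n,s) ∈ S } is finite of cardinality dn − g + 1. Let s_min = lim (min S_n)/n and s_max = lim (max S_n)/n (these limits exist and s_max = s_min + d). Then the discrete probability measures η_n := (1/|S_n|) Σ_{s ∈ S_n} δ_{s/n} converge weakly, as n → ∞, to the normalized Lebesgue measure on the interval [s_min, s_max]; that is, for every bounded continuous function φ : ℝ → ℝ, lim_{n→∞} (1/|S_n|) Σ_{s ∈ S_n} φ(s/n) = (1/d) ∫_{s_min}^{s_max} φ(x) dx. -/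
open Filter

/-- The `n`-th slice of a subset `S ⊆ ℕ × ℤ`. -/
def sgSlice (S : Set (ℕ × ℤ)) (n : ℕ) : Set ℤ := {s : ℤ | (n, s) ∈ S}

/-- The `n`-th slice viewed as a set of real numbers. -/
def sgSliceR (S : Set (ℕ × ℤ)) (n : ℕ) : Set ℝ := (fun s : ℤ => (s : ℝ)) '' sgSlice S n

/-!
Write `m n` and `M n` for the least and the largest element of the slice `S_n`. Since `S`
generates `ℤ × ℤ`, some slice `S_a` contains two consecutive integers `b, b + 1`. With
`k = M n - m n`, the sums of `t` elements of `{m n, M n}` form a progression of step `k` in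
`S_{tn}`, and adding the `k`-fold sums of `{b, b + 1}` fills in the gaps: `S_{tn+ka}` contains
an interval of `(t + 1) k + 1` integers. Comparing with `|S_N| = dN - g + 1` as `t → ∞` gives
`M n - m n ≤ d n`, so `S_n` is the interval `[m n, M n]` with at most `g` points removed.
Hence `(1/n) Σ_{s ∈ S_n} φ(s/n)` differs by `O(1/n)` from a Riemann sum of `φ` of mesh `1/n`
over `[m n / n, (M n + 1) / n]`, which tends to `∫_{s_min}^{s_max} φ`, while `|S_n| / n → d`.
-/

open Topology

theorem Int.sum_Ico_sub {M : Type*} [AddCommGroup M] (f : ℤ → M) {m n : ℤ} (h : m ≤ n) :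
    ∑ s ∈ Finset.Ico m n, (f (s + 1) - f s) = f n - f m := by
  induction n, h using Int.leInduction with
  | base => simp
  | succ n hn ih =>
    rw [← Finset.insert_Ico_right_eq_Ico_add_one hn, Finset.sum_insert (by simp), ih]
    abel

theorem Set.ncard_Icc_int {a b : ℤ} (h : a ≤ b + 1) : ((Set.Icc a b).ncard : ℤ) = b + 1 - a := by
  rw [← Finset.coe_Icc, Set.ncard_coe_finset, Int.card_Icc, Int.toNat_of_nonneg (by omega)]

theorem Nat.exists_eq_mul_add_of_le_succ_mul {r t k : ℕ} (h : r ≤ (t + 1) * k) :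
    ∃ j ≤ t, ∃ i ≤ k, r = j * k + i := by
  rcases le_or_gt r (t * k) with hr | hr
  · refine ⟨r / k, Nat.div_le_of_le_mul (by rwa [mul_comm]), r % k, ?_, (Nat.div_add_mod' r k).symm⟩
    rcases k.eq_zero_or_pos with rfl | hk
    · simp_all
    · exact (Nat.mod_lt r hk).le
  · exact ⟨t, le_rfl, r - t * k, by rw [add_mul] at h; omega, by omega⟩

theorem tendsto_natCast_div_mul_add {d : ℝ} (hd : d ≠ 0) (c : ℝ) :
    Tendsto (fun n : ℕ => (n : ℝ) / (d * n + c)) atTop (𝓝 (1 / d)) := by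
  have h := (tendsto_natCast_div_add_atTop (c / d)).const_mul (1 / d)
  rw [mul_one] at h
  refine h.congr fun n => ?_
  rw [show d * n + c = (n + c / d) * d by field_simp, div_mul_eq_div_div, one_div_mul_eq_div]

theorem abs_finsum_mem_le_ncard_mul {α : Type*} {f : α → ℝ} {B : ℝ} (hB : ∀ x, |f x| ≤ B)
    {s : Set α} (hs : s.Finite) : |∑ᶠ x ∈ s, f x| ≤ s.ncard * B := by
  rw [finsum_mem_eq_finite_toFinset_sum _ hs, Set.ncard_eq_toFinset_card _ hs, ← nsmul_eq_mul]
  exact (Finset.abs_sum_le_sum_abs _ _).trans (Finset.sum_le_card_nsmul _ _ _ fun x _ => hB x)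

theorem tendsto_finsum_mem_of_ncard_sdiff_le {α : Type*} [Nonempty α] {f : ℕ → α → ℝ} {B G L : ℝ}
    (hB : ∀ n x, |f n x| ≤ B) {A : ℕ → Set α} {I : ℕ → Finset α}
    (hA : ∀ᶠ n in atTop, A n ⊆ I n ∧ ((↑(I n) \ A n).ncard : ℝ) ≤ G)
    (hI : Tendsto (fun n : ℕ => (1 / n : ℝ) * ∑ x ∈ I n, f n x) atTop (𝓝 L)) :
    Tendsto (fun n : ℕ => (1 / n : ℝ) * ∑ᶠ x ∈ A n, f n x) atTop (𝓝 L) := by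
  have hB₀ : 0 ≤ B := (abs_nonneg _).trans (hB 0 (Classical.arbitrary α))
  have hgap : Tendsto (fun n : ℕ => (1 / n : ℝ) * ∑ᶠ x ∈ ↑(I n) \ A n, f n x) atTop (𝓝 0) := by
    refine squeeze_zero_norm' (a := fun n : ℕ => (1 / n : ℝ) * (G * B)) ?_
      (by simpa using tendsto_one_div_atTop_nhds_zero_nat.mul_const (G * B))
    filter_upwards [hA] with n ⟨_, hG⟩
    rw [norm_mul, Real.norm_eq_abs, Real.norm_eq_abs, abs_of_nonneg (by positivity)]
    gcongr
    exact (abs_finsum_mem_le_ncard_mul (hB n) (I n).finite_toSet.sdiff).trans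
      (mul_le_mul_of_nonneg_right hG hB₀)
  rw [← sub_zero L]
  refine (hI.sub hgap).congr' ?_
  filter_upwards [hA] with n ⟨hAI, _⟩
  rw [← mul_sub, ← finsum_mem_coe_finset, ← finsum_mem_add_sdiff hAI (I n).finite_toSet,
    add_sub_cancel_right]

theorem Set.Finite.ncard_Icc_csInf_csSup_sdiff {A : Set ℤ} (hA : A.Finite) (hne : A.Nonempty) :
    ((Set.Icc (sInf A) (sSup A) \ A).ncard : ℤ) = sSup A + 1 - sInf A - A.ncard := by
  have hsub := subset_Icc_csInf_csSup hA.bddBelow hA.bddAbove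
  rw [Set.ncard_sdiff hsub hA, Nat.cast_sub (Set.ncard_le_ncard hsub (Set.finite_Icc _ _)),
    Set.ncard_Icc_int (by linarith [csInf_le hA.bddBelow (hne.csSup_mem hA)])]

section RiemannSum

variable {φ : ℝ → ℝ}

theorem Continuous.tendsto_intervalIntegral (hφ : Continuous φ) {ι : Type*} {l : Filter ι}
    {u v : ι → ℝ} {α β : ℝ} (hu : Tendsto u l (𝓝 α)) (hv : Tendsto v l (𝓝 β)) :
    Tendsto (fun i => ∫ x in u i..v i, φ x) l (𝓝 (∫ x in α..β, φ x)) := by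
  have hint : ∀ a b, IntervalIntegrable φ MeasureTheory.volume a b := hφ.intervalIntegrable
  have hF := intervalIntegral.continuous_primitive hint α
  have key : ∀ a b, (∫ x in α..b, φ x) - ∫ x in α..a, φ x = ∫ x in a..b, φ x := fun a b =>
    intervalIntegral.integral_interval_sub_left (hint _ _) (hint _ _)
  have := (hF.tendsto β |>.comp hv).sub (hF.tendsto α |>.comp hu)
  simpa only [Function.comp_def, key, intervalIntegral.integral_same, sub_zero] using this

theorem abs_riemannSum_sub_integral_le (hφ : Continuous φ) {n : ℕ} (hn : 0 < n) {m M : ℤ}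
    (hmM : m ≤ M + 1) {ε : ℝ}
    (hε : ∀ s ∈ Finset.Icc m M, ∀ x ∈ Set.Icc ((s : ℝ) / n) ((s + 1) / n), |φ x - φ (s / n)| ≤ ε) :
    |(1 / n : ℝ) * ∑ s ∈ Finset.Icc m M, φ (s / n) - ∫ x in (m : ℝ) / n..(M + 1) / n, φ x|
      ≤ (M - m + 1) / n * ε := by
  have hn' : (0 : ℝ) < n := by exact_mod_cast hn
  have hint : ∀ a b, IntervalIntegrable φ MeasureTheory.volume a b := hφ.intervalIntegrable
  have hcells : ∑ s ∈ Finset.Icc m M, ∫ x in (s : ℝ) / n..(s + 1) / n, φ x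
      = ∫ x in (m : ℝ) / n..(M + 1) / n, φ x := by
    have := Int.sum_Ico_sub (fun s : ℤ => ∫ x in (m : ℝ) / n..(s : ℝ) / n, φ x) hmM
    simpa only [intervalIntegral.integral_interval_sub_left (hint _ _) (hint _ _),
      intervalIntegral.integral_same, sub_zero, Int.cast_add, Int.cast_one,
      Finset.Ico_add_one_right_eq_Icc] using this
  have hcell : ∀ s ∈ Finset.Icc m M,
      |(1 / n : ℝ) * φ (s / n) - ∫ x in (s : ℝ) / n..(s + 1) / n, φ x| ≤ ε / n := by
    intro s hs
    have hle : (s : ℝ) / n ≤ (s + 1) / n := by gcongr; linarith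
    have hlen : (s + 1 : ℝ) / n - s / n = 1 / n := by ring
    have hconst : (1 / n : ℝ) * φ (s / n) = ∫ _ in (s : ℝ) / n..(s + 1) / n, φ (s / n) := by
      rw [intervalIntegral.integral_const, hlen, smul_eq_mul]
    rw [hconst, ← intervalIntegral.integral_sub intervalIntegrable_const (hint _ _)]
    have := intervalIntegral.norm_integral_le_of_norm_le_const (C := ε)
      (f := fun x => φ (s / n) - φ x) (a := (s : ℝ) / n) (b := (s + 1) / n) fun x hx => by
        rw [Set.uIoc_of_le hle] at hx
        rw [Real.norm_eq_abs, abs_sub_comm]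
        exact hε s hs x (Set.Ioc_subset_Icc_self hx)
    rwa [Real.norm_eq_abs, hlen, abs_of_pos (one_div_pos.mpr hn'), mul_one_div] at this
  rw [← hcells, Finset.mul_sum, ← Finset.sum_sub_distrib]
  calc _ ≤ ∑ s ∈ Finset.Icc m M, ε / n :=
        (Finset.abs_sum_le_sum_abs _ _).trans (Finset.sum_le_sum hcell)
    _ = (M - m + 1) / n * ε := by
      have hcard : ((Finset.Icc m M).card : ℝ) = M - m + 1 := by
        rw [Int.card_Icc, ← Int.cast_natCast, Int.toNat_of_nonneg (by omega)]
        push_cast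
        ring
      rw [Finset.sum_const, nsmul_eq_mul, hcard]
      ring

theorem Continuous.eventually_abs_sub_le_on_cells (hφ : Continuous φ) {m M : ℕ → ℤ} {α β : ℝ}
    (hm : Tendsto (fun n : ℕ => (m n : ℝ) / n) atTop (𝓝 α))
    (hM : Tendsto (fun n : ℕ => ((M n : ℝ) + 1) / n) atTop (𝓝 β)) {ε : ℝ} (hε : 0 < ε) :
    ∀ᶠ n : ℕ in atTop, ∀ s ∈ Finset.Icc (m n) (M n),
      ∀ x ∈ Set.Icc ((s : ℝ) / n) ((s + 1) / n), |φ x - φ (s / n)| ≤ ε := by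
  obtain ⟨δ, hδ, hφδ⟩ := Metric.uniformContinuousOn_iff_le.1
    ((isCompact_Icc (a := α - 1) (b := β + 1)).uniformContinuousOn_of_continuous
      hφ.continuousOn) ε hε
  filter_upwards [hm.eventually (eventually_ge_nhds (sub_one_lt α)),
    hM.eventually (eventually_le_nhds (lt_add_one β)),
    tendsto_one_div_atTop_nhds_zero_nat.eventually (eventually_le_nhds hδ),
    eventually_gt_atTop 0] with n hmn hMn hδn hn s hs x ⟨hx₁, hx₂⟩
  have hn' : (0 : ℝ) < n := by exact_mod_cast hn
  obtain ⟨hs₁, hs₂⟩ := Finset.mem_Icc.1 hs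
  have hms : (m n : ℝ) / n ≤ s / n := by gcongr
  have hsM : ((s : ℝ) + 1) / n ≤ (M n + 1) / n := by gcongr
  have hcell : (s : ℝ) / n ≤ (s + 1) / n := by gcongr; linarith
  rw [← Real.dist_eq]
  refine hφδ x ⟨by linarith, by linarith⟩ (s / n) ⟨by linarith, by linarith⟩ ?_
  rw [Real.dist_eq, abs_of_nonneg (by linarith)]
  calc x - s / n ≤ (s + 1) / n - s / n := by linarith
    _ = 1 / n := by ring
    _ ≤ δ := hδn

theorem Continuous.tendsto_riemannSum (hφ : Continuous φ) {m M : ℕ → ℤ} {α β : ℝ}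
    (hm : Tendsto (fun n : ℕ => (m n : ℝ) / n) atTop (𝓝 α))
    (hM : Tendsto (fun n : ℕ => (M n : ℝ) / n) atTop (𝓝 β))
    (hmM : ∀ᶠ n in atTop, m n ≤ M n + 1) :
    Tendsto (fun n : ℕ => (1 / n : ℝ) * ∑ s ∈ Finset.Icc (m n) (M n), φ (s / n)) atTop
      (𝓝 (∫ x in α..β, φ x)) := by
  have hM₁ : Tendsto (fun n : ℕ => ((M n : ℝ) + 1) / n) atTop (𝓝 β) := by
    simpa [add_div] using hM.add tendsto_one_div_atTop_nhds_zero_nat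
  have herr : Tendsto (fun n : ℕ => (1 / n : ℝ) * ∑ s ∈ Finset.Icc (m n) (M n), φ (s / n)
      - ∫ x in (m n : ℝ) / n..(M n + 1) / n, φ x) atTop (𝓝 0) := by
    refine Metric.tendsto_nhds.2 fun ε hε => ?_
    set C := |β - α| + 1
    have hC : 0 < C := by positivity
    have hwidth : ∀ᶠ n : ℕ in atTop, ((M n : ℝ) - m n + 1) / n < C := by
      have hlt : β - α < C := by linarith [le_abs_self (β - α)]
      filter_upwards [(hM₁.sub hm).eventually (eventually_lt_nhds hlt)] with n hn
      rwa [← sub_div, add_sub_right_comm] at hn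
    filter_upwards [hφ.eventually_abs_sub_le_on_cells hm hM₁ (div_pos hε hC), hwidth, hmM,
      eventually_gt_atTop 0] with n hosc hw hmMn hn
    rw [Real.dist_eq, sub_zero]
    calc _ ≤ ((M n : ℝ) - m n + 1) / n * (ε / C) := abs_riemannSum_sub_integral_le hφ hn hmMn hosc
      _ < C * (ε / C) := mul_lt_mul_of_pos_right hw (div_pos hε hC)
      _ = ε := mul_div_cancel₀ _ hC.ne'
  simpa using herr.add (hφ.tendsto_intervalIntegral hm hM₁)

end RiemannSum

section Slices

variable {S : Set (ℕ × ℤ)}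

theorem eventually_sgSlice_finite_nonempty {d g : ℤ} (hd : 1 ≤ d) {n₀ : ℕ}
    (hcard : ∀ N : ℕ, n₀ ≤ N →
      (sgSlice S N).Finite ∧ ((sgSlice S N).ncard : ℤ) = d * N - g + 1) :
    ∀ᶠ n in atTop, (sgSlice S n).Finite ∧ (sgSlice S n).Nonempty := by
  filter_upwards [eventually_ge_atTop (max n₀ g.toNat)] with n hn
  obtain ⟨hfin, hn_card⟩ := hcard n (le_of_max_le_left hn)
  have hgn : g.toNat ≤ n := le_of_max_le_right hn
  have hdn : (n : ℤ) ≤ d * n := le_mul_of_one_le_left (by positivity) hd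
  refine ⟨hfin, ?_⟩
  rw [← Set.ncard_pos hfin]
  omega

theorem add_mem_sgSlice (hS : ∀ a ∈ S, ∀ b ∈ S, a + b ∈ S) {n n' : ℕ} {x y : ℤ}
    (hx : x ∈ sgSlice S n) (hy : y ∈ sgSlice S n') : x + y ∈ sgSlice S (n + n') :=
  hS _ hx _ hy

theorem mul_add_mul_mem_sgSlice (hS : ∀ a ∈ S, ∀ b ∈ S, a + b ∈ S) {n : ℕ} {x k : ℤ}
    (h₀ : x ∈ sgSlice S n) (h₁ : x + k ∈ sgSlice S n) {t j : ℕ} (ht : 1 ≤ t) (hj : j ≤ t) :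
    t * x + j * k ∈ sgSlice S (t * n) := by
  induction t, ht using Nat.le_induction generalizing j with
  | base =>
    interval_cases j
    · simpa using h₀
    · simpa using h₁
  | succ t ht ih =>
    rcases Nat.lt_or_eq_of_le hj with hj | rfl
    · have := add_mem_sgSlice hS (ih (Nat.le_of_lt_succ hj)) h₀
      rw [add_mul, one_mul]
      convert this using 1
      push_cast
      ring
    · have := add_mem_sgSlice hS (ih le_rfl) h₁
      rw [add_mul, one_mul]
      convert this using 1
      push_cast
      ring

theorem exists_add_one_mem_sgSlice (hS : ∀ a ∈ S, ∀ b ∈ S, a + b ∈ S) (hne : S.Nonempty)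
    (hgen : AddSubgroup.closure ((fun p : ℕ × ℤ => ((p.1 : ℤ), p.2)) '' S) = ⊤) :
    ∃ a b, b ∈ sgSlice S a ∧ b + 1 ∈ sgSlice S a := by
  set f : ℕ × ℤ → ℤ × ℤ := fun p => ((p.1 : ℤ), p.2)
  have hf : ∀ p q, f (p + q) = f p + f q := fun p q => by simp [f]
  obtain ⟨p₀, hp₀⟩ := hne
  -- `f '' S` is closed under addition, so the subgroup it generates consists of differences.
  have hdiff : ∀ z ∈ AddSubgroup.closure (f '' S), ∃ p ∈ S, ∃ q ∈ S, z = f p - f q := by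
    intro z hz
    induction hz using AddSubgroup.closure_induction with
    | mem z hz =>
      obtain ⟨p, hp, rfl⟩ := hz
      exact ⟨p + p₀, hS _ hp _ hp₀, p₀, hp₀, by rw [hf]; abel⟩
    | zero => exact ⟨p₀, hp₀, p₀, hp₀, by abel⟩
    | add z w _ _ hz hw =>
      obtain ⟨p, hp, q, hq, rfl⟩ := hz
      obtain ⟨p', hp', q', hq', rfl⟩ := hw
      exact ⟨p + p', hS _ hp _ hp', q + q', hS _ hq _ hq', by rw [hf, hf]; abel⟩
    | neg z _ hz =>
      obtain ⟨p, hp, q, hq, rfl⟩ := hz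
      exact ⟨q, hq, p, hp, by abel⟩
  obtain ⟨⟨a, b'⟩, hp, ⟨a', b⟩, hq, h⟩ := hdiff (0, 1) (hgen ▸ AddSubgroup.mem_top _)
  simp only [f, Prod.mk_sub_mk, Prod.mk.injEq] at h
  obtain rfl : a = a' := by omega
  obtain rfl : b' = b + 1 := by omega
  exact ⟨a, b, hq, hp⟩

theorem Icc_subset_sgSlice (hS : ∀ a ∈ S, ∀ b ∈ S, a + b ∈ S) {a : ℕ} {b : ℤ}
    (hb : b ∈ sgSlice S a) (hb₁ : b + 1 ∈ sgSlice S a) {n k t : ℕ} {x : ℤ}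
    (hx : x ∈ sgSlice S n) (hxk : x + k ∈ sgSlice S n) (hk : 1 ≤ k) (ht : 1 ≤ t) :
    Set.Icc (t * x + k * b) (t * x + k * b + (t + 1) * k) ⊆ sgSlice S (t * n + k * a) := by
  rintro s ⟨hs₁, hs₂⟩
  obtain ⟨j, hj, i, hi, hr⟩ :=
    Nat.exists_eq_mul_add_of_le_succ_mul (r := (s - (t * x + k * b)).toNat) (t := t) (k := k)
      (by zify; omega)
  have := add_mem_sgSlice hS (mul_add_mul_mem_sgSlice hS hx hxk ht hj)
    (mul_add_mul_mem_sgSlice hS hb hb₁ hk hi)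
  convert this using 1
  zify at hr
  rw [Int.toNat_of_nonneg (by omega)] at hr
  linarith

theorem sub_le_mul_of_mem_sgSlice (hS : ∀ a ∈ S, ∀ b ∈ S, a + b ∈ S) {d g : ℤ} (hd : 0 ≤ d)
    {n₀ : ℕ} (hcard : ∀ N : ℕ, n₀ ≤ N →
      (sgSlice S N).Finite ∧ ((sgSlice S N).ncard : ℤ) = d * N - g + 1)
    {a : ℕ} {b : ℤ} (hb : b ∈ sgSlice S a) (hb₁ : b + 1 ∈ sgSlice S a)
    {n : ℕ} (hn : 1 ≤ n) {x y : ℤ} (hx : x ∈ sgSlice S n) (hy : y ∈ sgSlice S n) :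
    y - x ≤ d * n := by
  by_contra! hlt
  have hdn : 0 ≤ d * n := by positivity
  obtain ⟨k, rfl⟩ : ∃ k : ℕ, y = x + k := ⟨(y - x).toNat, by omega⟩
  have hk : 1 ≤ k := by omega
  -- For `t` large the filled interval in `S_{tn+ka}` is longer than the slice itself.
  set t := n₀ + (d * k * a - g - k).toNat + 1 with ht
  have hN : n₀ ≤ t * n + k * a :=
    le_add_right ((by omega : n₀ ≤ t).trans (Nat.le_mul_of_pos_right t hn))
  obtain ⟨hfin, hN_card⟩ := hcard _ hN
  have hle := Set.ncard_le_ncard (Icc_subset_sgSlice hS hb hb₁ hx hy hk (by omega)) hfin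
  zify at hle
  rw [Set.ncard_Icc_int (by nlinarith), hN_card] at hle
  have htk : (t : ℤ) * (d * n + 1) ≤ t * k := by gcongr; omega
  have : (t : ℤ) > d * k * a - g - k := by omega
  push_cast at hle
  linarith

theorem ncard_Icc_sdiff_sgSlice_le (hS : ∀ a ∈ S, ∀ b ∈ S, a + b ∈ S) {d g : ℤ} (hd : 0 ≤ d)
    {n₀ : ℕ} (hcard : ∀ N : ℕ, n₀ ≤ N →
      (sgSlice S N).Finite ∧ ((sgSlice S N).ncard : ℤ) = d * N - g + 1)
    {a : ℕ} {b : ℤ} (hb : b ∈ sgSlice S a) (hb₁ : b + 1 ∈ sgSlice S a)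
    {n : ℕ} (hn : 1 ≤ n) (hn₀ : n₀ ≤ n) (hne : (sgSlice S n).Nonempty) :
    ((Set.Icc (sInf (sgSlice S n)) (sSup (sgSlice S n)) \ sgSlice S n).ncard : ℤ) ≤ g := by
  obtain ⟨hfin, hn_card⟩ := hcard n hn₀
  have := sub_le_mul_of_mem_sgSlice hS hd hcard hb hb₁ hn (hne.csInf_mem hfin) (hne.csSup_mem hfin)
  rw [hfin.ncard_Icc_csInf_csSup_sdiff hne, hn_card]
  linarith

theorem sInf_sgSliceR {n : ℕ} (hfin : (sgSlice S n).Finite)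
    (hne : (sgSlice S n).Nonempty) : sInf (sgSliceR S n) = ((sInf (sgSlice S n) : ℤ) : ℝ) :=
  (Int.cast_mono.map_csInf_of_continuousAt continuous_of_discreteTopology.continuousAt hne
    hfin.bddBelow).symm

theorem sSup_sgSliceR {n : ℕ} (hfin : (sgSlice S n).Finite)
    (hne : (sgSlice S n).Nonempty) : sSup (sgSliceR S n) = ((sSup (sgSlice S n) : ℤ) : ℝ) :=
  (Int.cast_mono.map_csSup_of_continuousAt continuous_of_discreteTopology.continuousAt hne
    hfin.bddAbove).symm

end Slices

theorem statement_14_general (d g : ℤ) (hd : 1 ≤ d) (S : Set (ℕ × ℤ))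
    (hadd : ∀ a ∈ S, ∀ b ∈ S, a + b ∈ S)
    (hgen : AddSubgroup.closure ((fun p : ℕ × ℤ => ((p.1 : ℤ), p.2)) '' S) = ⊤)
    (hslice : ∃ n₀ : ℕ, 1 ≤ n₀ ∧ ∀ n : ℕ, n₀ ≤ n →
      (sgSlice S n).Finite ∧ ((sgSlice S n).ncard : ℤ) = d * n - g + 1)
    (smin smax : ℝ)
    (hmin : Tendsto (fun n : ℕ => sInf (sgSliceR S n) / n) atTop (nhds smin))
    (hmax : Tendsto (fun n : ℕ => sSup (sgSliceR S n) / n) atTop (nhds smax))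
    (φ : ℝ → ℝ) (hφc : Continuous φ) (hφb : ∃ M : ℝ, ∀ x : ℝ, |φ x| ≤ M) :
    Tendsto (fun n : ℕ =>
        (1 / ((sgSlice S n).ncard : ℝ)) * ∑ᶠ s ∈ sgSlice S n, φ ((s : ℝ) / n))
      atTop (nhds ((1 / (d : ℝ)) * ∫ x in smin..smax, φ x)) := by
  obtain ⟨B, hB⟩ := hφb
  obtain ⟨n₀, -, hcard⟩ := hslice
  have hslices := (eventually_sgSlice_finite_nonempty hd hcard).and
    ((eventually_ge_atTop 1).and (eventually_ge_atTop n₀))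
  obtain ⟨n, ⟨-, s, hs⟩, -⟩ := hslices.exists
  obtain ⟨a, b, hb, hb₁⟩ := exists_add_one_mem_sgSlice hadd ⟨_, hs⟩ hgen
  set m : ℕ → ℤ := fun n => sInf (sgSlice S n)
  set M : ℕ → ℤ := fun n => sSup (sgSlice S n)
  have hRiemann := hφc.tendsto_riemannSum (m := m) (M := M)
    (hmin.congr' (by filter_upwards [hslices] with n ⟨⟨hfin, hne⟩, _⟩
                     rw [sInf_sgSliceR hfin hne]))
    (hmax.congr' (by filter_upwards [hslices] with n ⟨⟨hfin, hne⟩, _⟩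
                     rw [sSup_sgSliceR hfin hne]))
    (by filter_upwards [hslices] with n ⟨⟨hfin, hne⟩, _⟩
        linarith [csInf_le hfin.bddBelow (hne.csSup_mem hfin)])
  have hmissing : ∀ᶠ n in atTop, sgSlice S n ⊆ ↑(Finset.Icc (m n) (M n)) ∧
      ((↑(Finset.Icc (m n) (M n)) \ sgSlice S n).ncard : ℝ) ≤ g := by
    filter_upwards [hslices] with n ⟨⟨hfin, hne⟩, hn, hn₀⟩
    rw [Finset.coe_Icc]
    exact ⟨subset_Icc_csInf_csSup hfin.bddBelow hfin.bddAbove,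
      by exact_mod_cast ncard_Icc_sdiff_sgSlice_le hadd (by omega) hcard hb hb₁ hn hn₀ hne⟩
  have hslice_avg := tendsto_finsum_mem_of_ncard_sdiff_le (f := fun n s => φ ((s : ℤ) / n))
    (A := sgSlice S) (I := fun n => Finset.Icc (m n) (M n)) (fun n s => hB _) hmissing hRiemann
  refine ((tendsto_natCast_div_mul_add (by positivity) (1 - g)).mul hslice_avg).congr' ?_
  filter_upwards [hslices] with n ⟨_, _, hn₀⟩
  have hn_card : ((sgSlice S n).ncard : ℝ) = d * n - g + 1 := by exact_mod_cast (hcard n hn₀).2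
  rw [hn_card, show (d : ℝ) * n + (1 - g) = d * n - g + 1 by ring]
  field_simp

/-- Let `S ⊆ ℕ × ℤ` be an additive subsemigroup which generates
`ℤ × ℤ` as a group, has linearly bounded slices, and whose `n`-th slice has
cardinality `d·n - g + 1` for all large `n`. Let `s_min = lim (min S_n)/n` and
`s_max = lim (max S_n)/n`. Then the uniform probability measures on the
normalized slices `{ s/n : s ∈ S_n }` converge weakly to the normalized Lebesgue
measure on `[s_min, s_max]`: for every bounded continuous `φ : ℝ → ℝ`,
`(1/|S_n|) Σ_{s ∈ S_n} φ(s/n) → (1/d) ∫_{s_min}^{s_max} φ`. -/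
theorem statement_14 (d g : ℤ) (hd : 1 ≤ d) (S : Set (ℕ × ℤ))
    (hadd : ∀ a ∈ S, ∀ b ∈ S, a + b ∈ S)
    (hgen : AddSubgroup.closure ((fun p : ℕ × ℤ => ((p.1 : ℤ), p.2)) '' S) = ⊤)
    (hbdd : ∃ C : ℝ, ∀ p ∈ S, 1 ≤ p.1 → |(p.2 : ℝ)| ≤ C * p.1)
    (hslice : ∃ n₀ : ℕ, 1 ≤ n₀ ∧ ∀ n : ℕ, n₀ ≤ n →
      (sgSlice S n).Finite ∧ ((sgSlice S n).ncard : ℤ) = d * n - g + 1)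
    (smin smax : ℝ)
    (hmin : Tendsto (fun n : ℕ => sInf (sgSliceR S n) / n) atTop (nhds smin))
    (hmax : Tendsto (fun n : ℕ => sSup (sgSliceR S n) / n) atTop (nhds smax))
    (φ : ℝ → ℝ) (hφc : Continuous φ) (hφb : ∃ M : ℝ, ∀ x : ℝ, |φ x| ≤ M) :
    Tendsto (fun n : ℕ =>
        (1 / ((sgSlice S n).ncard : ℝ)) * ∑ᶠ s ∈ sgSlice S n, φ ((s : ℝ) / n))
      atTop (nhds ((1 / (d : ℝ)) * ∫ x in smin..smax, φ x)) :=
  statement_14_general d g hd S hadd hgen hslice smin smax hmin hmax φ hφc hφb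
end
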